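/- Let ρ_sc(x) = (1/(2π))√(4−x^2)·1_{|x|≤2} and m_sc(z) = ∫ ρ_sc(x)/(x−z) dx. For any reals a < b, any ε > 0 with a + ε ≤ b − ε, and any 0 < δ ≤ ε: (1/π)·Im ∫_{a+ε}^{b−ε} m_sc(λ+iδ) dλ − δ/ε ≤ ∫_a^b ρ_sc(x) dx ≤ (1 + 2δ/ε)·(1/π)·Im ∫_{a−ε}^{b+ε} m_sc(λ+iδ) dλ. -/

import Mathlib

open intervalIntegral

/-- The density of the standard semicircle law. -/
noncomputable def rhoSC (x : ℝ) : ℝ :=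
  if |x| ≤ 2 then (1 / (2 * Real.pi)) * Real.sqrt (4 - x ^ 2) else 0

/-- The Stieltjes transform `m_sc(z) = ∫ ρ_sc(x)/(x - z) dx` of the semicircle law. -/
noncomputable def mSC (z : ℂ) : ℂ := ∫ x in (-2 : ℝ)..2, (rhoSC x : ℂ) / (x - z)

/-!
With `P_δ(t) = δ / (t² + δ²)`, one has `Im m_sc(λ + iδ) = ∫ ρ_sc(x) P_δ(x - λ) dx`, so by Fubini
`Im ∫_A^B m_sc(λ + iδ) dλ = ∫ ρ_sc(x) w(x) dx` with `w(x) = arctan((B - x)/δ) - arctan((A - x)/δ)`,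
the Poisson smoothing of `π · 1_{[A, B]}`. Since `arctan t ≥ π/2 - 1/t` for `t > 0`, `w ≤ δ/ε` at
distance `≥ ε` outside `[A, B]` and `w ≥ π - 2δ/ε` at distance `≥ ε` inside, while always
`0 ≤ w ≤ π`. Integrating these bounds against the probability density `ρ_sc` gives both
inequalities.
-/

open Real MeasureTheory Set Function

namespace Real

lemma arctan_le_self {t : ℝ} (ht : 0 ≤ t) : arctan t ≤ t :=
  calc arctan t ≤ tan (arctan t) := le_tan (arctan_nonneg.mpr ht) (arctan_lt_pi_div_two t)
    _ = t := tan_arctan t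

lemma pi_div_two_sub_div_le_arctan_div {δ ε t : ℝ} (hδ : 0 < δ) (hε : 0 < ε) (ht : ε ≤ t) :
    π / 2 - δ / ε ≤ arctan (t / δ) := by
  have htδ : 0 < t / δ := div_pos (hε.trans_le ht) hδ
  have hinv : (t / δ)⁻¹ ≤ δ / ε := by
    rw [inv_div]; exact div_le_div_of_nonneg_left hδ.le hε ht
  have := arctan_inv_of_pos htδ
  have := arctan_le_self (inv_nonneg.mpr htδ.le)
  linarith

lemma arctan_div_le_neg_pi_div_two_add_div {δ ε t : ℝ} (hδ : 0 < δ) (hε : 0 < ε) (ht : t ≤ -ε) :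
    arctan (t / δ) ≤ -(π / 2) + δ / ε := by
  have := pi_div_two_sub_div_le_arctan_div hδ hε (le_neg_of_le_neg ht)
  rw [neg_div, arctan_neg] at this
  linarith

lemma arctan_sub_arctan_le_of_far {δ ε A B x : ℝ} (hδ : 0 < δ) (hε : 0 < ε)
    (hx : x ≤ A - ε ∨ B + ε ≤ x) :
    arctan ((B - x) / δ) - arctan ((A - x) / δ) ≤ δ / ε := by
  rcases hx with hx | hx
  · have := pi_div_two_sub_div_le_arctan_div (t := A - x) hδ hε (by linarith)
    linarith [arctan_lt_pi_div_two ((B - x) / δ)]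
  · have := arctan_div_le_neg_pi_div_two_add_div (t := B - x) hδ hε (by linarith)
    linarith [neg_pi_div_two_lt_arctan ((A - x) / δ)]

lemma pi_sub_two_mul_le_arctan_sub_arctan {δ ε A B x : ℝ} (hδ : 0 < δ) (hε : 0 < ε)
    (hA : A + ε ≤ x) (hB : x + ε ≤ B) :
    π - 2 * (δ / ε) ≤ arctan ((B - x) / δ) - arctan ((A - x) / δ) := by
  have := pi_div_two_sub_div_le_arctan_div (t := B - x) hδ hε (by linarith)
  have := arctan_div_le_neg_pi_div_two_add_div (t := A - x) hδ hε (by linarith)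
  linarith

end Real

lemma integral_div_sub_sq_add_sq {δ : ℝ} (hδ : 0 < δ) (x A B : ℝ) :
    ∫ lam in A..B, δ / ((x - lam) ^ 2 + δ ^ 2)
      = arctan ((B - x) / δ) - arctan ((A - x) / δ) := by
  have hpos (lam : ℝ) : 0 < (x - lam) ^ 2 + δ ^ 2 := by positivity
  refine integral_eq_sub_of_hasDerivAt (f := fun lam => arctan ((lam - x) / δ)) (fun lam _ => ?_) ?_
  · have hlin : HasDerivAt (fun lam => (lam - x) / δ) (1 / δ) lam :=
      ((hasDerivAt_id' lam).sub_const x).div_const δ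
    refine hlin.arctan.congr_deriv ?_
    have := hpos lam
    field_simp
    ring
  · exact (continuous_const.div (by fun_prop) fun lam => (hpos lam).ne').intervalIntegrable _ _

section Density

variable {ρ : ℝ → ℝ} {δ : ℝ}

lemma integrable_div_sub (hρ : Integrable ρ) (hδ : 0 < δ) (lam : ℝ) :
    Integrable fun x : ℝ => (ρ x : ℂ) / (x - (lam + δ * Complex.I)) := by
  have hne (x : ℝ) : (x : ℂ) - (lam + δ * Complex.I) ≠ 0 := fun h => by
    simpa [hδ.ne'] using congrArg Complex.im h
  simp_rw [div_eq_mul_inv]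
  refine hρ.ofReal.mul_bdd (c := δ⁻¹)
    (Continuous.aestronglyMeasurable (by fun_prop (disch := exact hne))) (ae_of_all _ fun x => ?_)
  rw [norm_inv]
  refine inv_anti₀ hδ ?_
  simpa [abs_of_pos hδ] using Complex.abs_im_le_norm ((x : ℂ) - (lam + δ * Complex.I))

lemma im_integral_div_sub (hρ : Integrable ρ) (hδ : 0 < δ) (lam : ℝ) :
    (∫ x : ℝ, (ρ x : ℂ) / (x - (lam + δ * Complex.I))).im
      = ∫ x, ρ x * (δ / ((x - lam) ^ 2 + δ ^ 2)) := by
  rw [← Complex.imCLM_apply, ← Complex.imCLM.integral_comp_comm (integrable_div_sub hρ hδ lam)]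
  congr 1 with x
  simp [Complex.div_im, Complex.normSq_apply]
  ring

lemma integral_im_integral_div_sub (hρ : Integrable ρ) (hδ : 0 < δ) (A B : ℝ) :
    ∫ lam in A..B, (∫ x : ℝ, (ρ x : ℂ) / (x - (lam + δ * Complex.I))).im
      = ∫ x, ρ x * (arctan ((B - x) / δ) - arctan ((A - x) / δ)) := by
  have hbound : Integrable (uncurry fun lam x => ρ x * (δ / ((x - lam) ^ 2 + δ ^ 2)))
      ((volume.restrict (uIoc A B)).prod volume) := by
    have hpos (p : ℝ × ℝ) : 0 < (p.2 - p.1) ^ 2 + δ ^ 2 := by positivity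
    refine ((intervalIntegrable_const (c := δ⁻¹)).def'.mul_prod hρ.norm).mono'
      (hρ.aestronglyMeasurable.comp_snd.mul (Continuous.aestronglyMeasurable
        (continuous_const.div (by fun_prop) fun p => (hpos p).ne'))) (ae_of_all _ fun p => ?_)
    have hker : δ / ((p.2 - p.1) ^ 2 + δ ^ 2) ≤ δ⁻¹ := by
      rw [div_le_iff₀ (hpos p)]
      field_simp
      nlinarith [sq_nonneg (p.2 - p.1)]
    rw [uncurry_apply_pair, norm_mul, Real.norm_of_nonneg (div_pos hδ (hpos p)).le, mul_comm]
    exact mul_le_mul_of_nonneg_right hker (norm_nonneg _)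
  simp_rw [im_integral_div_sub hρ hδ, intervalIntegral_integral_swap hbound,
    intervalIntegral.integral_const_mul, integral_div_sub_sq_add_sq hδ]

lemma integrable_mul_arctan_sub_arctan (hρ : Integrable ρ) (A B : ℝ) :
    Integrable fun x => ρ x * (arctan ((B - x) / δ) - arctan ((A - x) / δ)) := by
  refine hρ.mul_bdd (c := π) (Continuous.aestronglyMeasurable (by fun_prop))
    (ae_of_all _ fun x => ?_)
  rw [Real.norm_eq_abs, abs_le]
  constructor <;>
    linarith [arctan_lt_pi_div_two ((B - x) / δ), neg_pi_div_two_lt_arctan ((B - x) / δ),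
      arctan_lt_pi_div_two ((A - x) / δ), neg_pi_div_two_lt_arctan ((A - x) / δ)]

lemma integral_mul_arctan_sub_arctan_le (hρ0 : ∀ x, 0 ≤ ρ x) (hρ : Integrable ρ) (hδ : 0 < δ)
    {ε a b : ℝ} (hε : 0 < ε) (hab : a ≤ b) :
    ∫ x, ρ x * (arctan ((b - ε - x) / δ) - arctan ((a + ε - x) / δ))
      ≤ π * (∫ x in a..b, ρ x) + δ / ε * ∫ x, ρ x := by
  have hind : Integrable ((Ioc a b).indicator ρ) := hρ.indicator measurableSet_Ioc
  rw [integral_of_le hab, ← MeasureTheory.integral_indicator measurableSet_Ioc,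
    ← MeasureTheory.integral_const_mul, ← MeasureTheory.integral_const_mul,
    ← integral_add (hind.const_mul _) (hρ.const_mul _)]
  refine integral_mono (integrable_mul_arctan_sub_arctan hρ _ _)
    ((hind.const_mul _).add (hρ.const_mul _)) fun x => ?_
  by_cases hx : x ∈ Ioc a b
  · rw [indicator_of_mem hx]
    have := arctan_lt_pi_div_two ((b - ε - x) / δ)
    have := neg_pi_div_two_lt_arctan ((a + ε - x) / δ)
    nlinarith [hρ0 x, div_pos hδ hε]
  · rw [indicator_of_notMem hx, mul_zero, zero_add, mul_comm]
    refine mul_le_mul_of_nonneg_right (arctan_sub_arctan_le_of_far hδ hε ?_) (hρ0 x)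
    rw [mem_Ioc, not_and_or, not_lt, not_le] at hx
    rcases hx with hx | hx
    · left; linarith
    · right; linarith

lemma pi_mul_integral_le_integral_mul_arctan_sub_arctan (hρ0 : ∀ x, 0 ≤ ρ x) (hρ : Integrable ρ)
    (hδ : 0 < δ) {ε a b : ℝ} (hε : 0 < ε) (hδε : δ ≤ ε) (hab : a ≤ b) :
    π * (∫ x in a..b, ρ x)
      ≤ (1 + 2 * (δ / ε)) * ∫ x, ρ x * (arctan ((b + ε - x) / δ) - arctan ((a - ε - x) / δ)) := by
  have hc0 : 0 < δ / ε := div_pos hδ hε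
  have hc1 : δ / ε ≤ 1 := (div_le_one hε).mpr hδε
  rw [integral_of_le hab, ← MeasureTheory.integral_indicator measurableSet_Ioc,
    ← MeasureTheory.integral_const_mul, ← MeasureTheory.integral_const_mul]
  refine integral_mono ((hρ.indicator measurableSet_Ioc).const_mul _)
    ((integrable_mul_arctan_sub_arctan hρ _ _).const_mul _) fun x => ?_
  by_cases hx : x ∈ Ioc a b
  · rw [indicator_of_mem hx]
    have hw := pi_sub_two_mul_le_arctan_sub_arctan (x := x) (A := a - ε) (B := b + ε) hδ hε
      (by linarith [hx.1]) (by linarith [hx.2])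
    have hπ : π ≤ (1 + 2 * (δ / ε)) * (π - 2 * (δ / ε)) := by nlinarith [pi_gt_three]
    calc π * ρ x ≤ (1 + 2 * (δ / ε)) * (π - 2 * (δ / ε)) * ρ x :=
          mul_le_mul_of_nonneg_right hπ (hρ0 x)
      _ = (1 + 2 * (δ / ε)) * (ρ x * (π - 2 * (δ / ε))) := by ring
      _ ≤ _ := by gcongr; exact hρ0 x
  · rw [indicator_of_notMem hx, mul_zero]
    have hw : arctan ((a - ε - x) / δ) ≤ arctan ((b + ε - x) / δ) :=
      arctan_le_arctan_iff.mpr (div_le_div_of_nonneg_right (by linarith) hδ.le)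
    exact mul_nonneg (by linarith) (mul_nonneg (hρ0 x) (sub_nonneg.mpr hw))

end Density

lemma rhoSC_eq (x : ℝ) : rhoSC x = 1 / (2 * π) * √(4 - x ^ 2) := by
  unfold rhoSC
  split_ifs with hx
  · rfl
  · rw [Real.sqrt_eq_zero'.mpr (by nlinarith [sq_abs x, not_le.mp hx]), mul_zero]

lemma rhoSC_nonneg (x : ℝ) : 0 ≤ rhoSC x := by
  rw [rhoSC_eq]; positivity

lemma continuous_rhoSC : Continuous rhoSC := by
  simp_rw [funext rhoSC_eq]; fun_prop

lemma support_rhoSC_subset : support rhoSC ⊆ Ioo (-2) 2 := by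
  intro x hx
  by_contra hx'
  refine hx (?_ : rhoSC x = 0)
  have : 4 - x ^ 2 ≤ 0 := by
    rw [mem_Ioo, not_and_or, not_lt, not_lt] at hx'
    rcases hx' with h | h <;> nlinarith
  rw [rhoSC_eq, Real.sqrt_eq_zero'.mpr this, mul_zero]

lemma integrable_rhoSC : Integrable rhoSC :=
  continuous_rhoSC.integrable_of_hasCompactSupport
    (HasCompactSupport.intro isCompact_Icc fun _ hx =>
      notMem_support.mp fun h => hx (Ioo_subset_Icc_self (support_rhoSC_subset h)))

lemma integral_sqrt_four_sub_sq : ∫ x in (-2 : ℝ)..2, √(4 - x ^ 2) = 2 * π := by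
  have h := intervalIntegral.integral_comp_mul_left (fun x => √(4 - x ^ 2)) (a := -1) (b := 1)
    two_ne_zero
  have hscale (u : ℝ) : √(4 - (2 * u) ^ 2) = 2 * √(1 - u ^ 2) := by
    rw [show 4 - (2 * u) ^ 2 = 2 ^ 2 * (1 - u ^ 2) by ring, Real.sqrt_mul (by norm_num),
      Real.sqrt_sq zero_le_two]
  simp only [hscale, intervalIntegral.integral_const_mul, integral_sqrt_one_sub_sq] at h
  norm_num at h
  linarith

lemma integral_rhoSC : ∫ x, rhoSC x = 1 := by
  rw [← intervalIntegral.integral_eq_integral_of_support_subset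
    (support_rhoSC_subset.trans Ioo_subset_Ioc_self), funext rhoSC_eq,
    intervalIntegral.integral_const_mul, integral_sqrt_four_sub_sq]
  field_simp

lemma mSC_eq_integral (z : ℂ) : mSC z = ∫ x : ℝ, (rhoSC x : ℂ) / (x - z) := by
  refine intervalIntegral.integral_eq_integral_of_support_subset ?_
  rw [support_div]
  exact inter_subset_left.trans (by simpa using support_rhoSC_subset.trans Ioo_subset_Ioc_self)

theorem stmt17_general (a b ε δ : ℝ) (hab : a < b) (hε : 0 < ε) (hδ0 : 0 < δ) (hδε : δ ≤ ε) :
    (1 / Real.pi) * (∫ lam in (a + ε)..(b - ε), (mSC (lam + δ * Complex.I)).im) - δ / ε ≤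
        ∫ x in a..b, rhoSC x ∧
      (∫ x in a..b, rhoSC x) ≤
        (1 + 2 * δ / ε) * ((1 / Real.pi) *
          ∫ lam in (a - ε)..(b + ε), (mSC (lam + δ * Complex.I)).im) := by
  simp only [mSC_eq_integral, integral_im_integral_div_sub integrable_rhoSC hδ0]
  have hlower := integral_mul_arctan_sub_arctan_le rhoSC_nonneg integrable_rhoSC hδ0 hε hab.le
  have hupper := pi_mul_integral_le_integral_mul_arctan_sub_arctan rhoSC_nonneg integrable_rhoSC
    hδ0 hε hδε hab.le
  rw [integral_rhoSC, mul_one] at hlower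
  constructor
  · have hc : δ / ε ≤ δ / ε * π :=
      le_mul_of_one_le_right (div_pos hδ0 hε).le (by linarith [pi_gt_three])
    rw [sub_le_iff_le_add, one_div_mul_eq_div, div_le_iff₀ pi_pos]
    linarith
  · rw [mul_div_assoc]
    calc ∫ x in a..b, rhoSC x = 1 / π * (π * ∫ x in a..b, rhoSC x) := by field_simp
      _ ≤ 1 / π * ((1 + 2 * (δ / ε)) * _) := by gcongr
      _ = _ := by ring

/-- For `a < b`, `ε > 0` with `a + ε ≤ b - ε`, and `0 < δ ≤ ε`,
`(1/π) Im ∫_{a+ε}^{b-ε} m_sc(λ+iδ) dλ - δ/ε ≤ ∫_a^b ρ_sc ≤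
(1 + 2δ/ε) (1/π) Im ∫_{a-ε}^{b+ε} m_sc(λ+iδ) dλ`. -/
theorem stmt17 (a b ε δ : ℝ) (hab : a < b) (hε : 0 < ε) (hδ0 : 0 < δ) (hδε : δ ≤ ε)
    (h : a + ε ≤ b - ε) :
    (1 / Real.pi) * (∫ lam in (a + ε)..(b - ε), (mSC (lam + δ * Complex.I)).im) - δ / ε ≤
        ∫ x in a..b, rhoSC x ∧
      (∫ x in a..b, rhoSC x) ≤
        (1 + 2 * δ / ε) * ((1 / Real.pi) *
          ∫ lam in (a - ε)..(b + ε), (mSC (lam + δ * Complex.I)).im) :=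
  stmt17_general a b ε δ hab hε hδ0 hδε
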